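/- arXiv:1508.05513 — 9 statements merged into one kernel-verified Lean document; each statement's English description precedes it below -/
import Mathlib

section
/- For all x > 0 and all a ∈ (0,1), it holds that 1/(x+a)^(1-a) < Γ(x+a)/Γ(x+1) < 1/x^(1-a), where Γ is the Euler gamma function. -/
open Real Set

-- key recurrence in log form
lemma logGamma_add_one {y : ℝ} (hy : 0 < y) :
    Real.log (Real.Gamma (y + 1)) = Real.log (Real.Gamma y) + Real.log y := by
  rw [Real.Gamma_add_one hy.ne', Real.log_mul hy.ne' (Real.Gamma_pos_of_pos hy).ne']
  ring

-- non-strict upper (Wendel): log Γ(y+a) ≤ log Γ(y+1) + (a-1) log y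
lemma wendel_upper {a : ℝ} (ha0 : 0 < a) (ha1 : a < 1) {y : ℝ} (hy : 0 < y) :
    Real.log (Real.Gamma (y + a)) ≤ Real.log (Real.Gamma (y + 1)) + (a - 1) * Real.log y := by
  have h := Real.convexOn_log_Gamma.2 (Set.mem_Ioi.2 hy) (Set.mem_Ioi.2 (by linarith : (0:ℝ) < y + 1))
    (by linarith : (0:ℝ) ≤ 1 - a) ha0.le (by ring)
  simp only [smul_eq_mul, Function.comp_apply] at h
  have he : (1 - a) * y + a * (y + 1) = y + a := by ring
  rw [he] at h
  have hrec := logGamma_add_one hy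
  nlinarith [h, hrec]

-- non-strict lower (Wendel): log Γ(y+1) ≤ log Γ(y+a) + (1-a) log (y+a)
lemma wendel_lower {a : ℝ} (ha0 : 0 < a) (ha1 : a < 1) {y : ℝ} (hy : 0 < y) :
    Real.log (Real.Gamma (y + 1)) ≤ Real.log (Real.Gamma (y + a)) + (1 - a) * Real.log (y + a) := by
  have hya : (0:ℝ) < y + a := by linarith
  have h := Real.convexOn_log_Gamma.2 (Set.mem_Ioi.2 hya)
    (Set.mem_Ioi.2 (by linarith : (0:ℝ) < y + a + 1))
    ha0.le (by linarith : (0:ℝ) ≤ 1 - a) (by ring)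
  simp only [smul_eq_mul, Function.comp_apply] at h
  have he : a * (y + a) + (1 - a) * (y + a + 1) = y + 1 := by ring
  rw [he] at h
  have hrec := logGamma_add_one hya
  nlinarith [h, hrec]

theorem gamma_ratio_bounds (x a : ℝ) (hx : 0 < x) (ha : a ∈ Set.Ioo (0:ℝ) 1) :
    1 / (x + a) ^ (1 - a) < Real.Gamma (x + a) / Real.Gamma (x + 1) ∧
    Real.Gamma (x + a) / Real.Gamma (x + 1) < 1 / x ^ (1 - a) := by
  obtain ⟨ha0, ha1⟩ := ha
  have hxa : (0:ℝ) < x + a := by linarith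
  have hx1 : (0:ℝ) < x + 1 := by linarith
  have hGa : 0 < Real.Gamma (x + a) := Real.Gamma_pos_of_pos hxa
  have hG1 : 0 < Real.Gamma (x + 1) := Real.Gamma_pos_of_pos hx1
  -- recurrences
  have hrec_a := logGamma_add_one hxa   -- logΓ(x+a+1) = logΓ(x+a) + log(x+a)
  have hrec_1 := logGamma_add_one hx1   -- logΓ(x+2) = logΓ(x+1) + log(x+1)
  have hea : x + a + 1 = (x + 1) + a := by ring
  have he1 : x + 1 + 1 = (x + 1) + 1 := by ring
  -- strict upper in log form: logΓ(x+a) < logΓ(x+1) + (a-1) log x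
  have hU : Real.log (Real.Gamma (x + a)) <
      Real.log (Real.Gamma (x + 1)) + (a - 1) * Real.log x := by
    have h1 := wendel_upper ha0 ha1 hx1   -- logΓ(x+1+a) ≤ logΓ(x+2) + (a-1)log(x+1)
    rw [← hea] at h1
    -- strict concavity: a log(x+1) + (1-a) log x < log(x+a)
    have h2 := strictConcaveOn_log_Ioi.2 (Set.mem_Ioi.2 hx1) (Set.mem_Ioi.2 hx)
      (by linarith : x + 1 ≠ x) ha0 (by linarith : (0:ℝ) < 1 - a) (by ring)
    simp only [smul_eq_mul] at h2
    have he : a * (x + 1) + (1 - a) * x = x + a := by ring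
    rw [he] at h2
    nlinarith [h1, h2, hrec_a, hrec_1]
  -- strict lower in log form: logΓ(x+1) + (a-1) log(x+a) < logΓ(x+a)
  have hL : Real.log (Real.Gamma (x + 1)) + (a - 1) * Real.log (x + a) <
      Real.log (Real.Gamma (x + a)) := by
    have h1 := wendel_lower ha0 ha1 hx1   -- logΓ(x+2) ≤ logΓ(x+1+a) + (1-a)log(x+1+a)
    rw [← hea] at h1
    -- strict concavity: a log(x+a) + (1-a) log(x+a+1) < log(x+1)
    have h2 := strictConcaveOn_log_Ioi.2 (Set.mem_Ioi.2 hxa)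
      (Set.mem_Ioi.2 (by linarith : (0:ℝ) < x + a + 1))
      (by linarith : x + a ≠ x + a + 1) ha0 (by linarith : (0:ℝ) < 1 - a) (by ring)
    simp only [smul_eq_mul] at h2
    have he : a * (x + a) + (1 - a) * (x + a + 1) = x + 1 := by ring
    rw [he] at h2
    nlinarith [h1, h2, hrec_a, hrec_1]
  constructor
  · rw [← Real.log_lt_log_iff (by positivity) (by positivity)]
    rw [Real.log_div hGa.ne' hG1.ne', Real.log_div one_ne_zero (by positivity),
      Real.log_rpow hxa, Real.log_one]
    linarith
  · rw [← Real.log_lt_log_iff (by positivity) (by positivity)]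
    rw [Real.log_div hGa.ne' hG1.ne', Real.log_div one_ne_zero (by positivity),
      Real.log_rpow hx, Real.log_one]
    linarith
end

section
/- For every positive real number x, the digamma function satisfies ψ(x+1) > ln(x + 1/2). -/
/-- The digamma function `ψ(x) = Γ'(x)/Γ(x)`. -/
noncomputable def digamma (x : ℝ) : ℝ := deriv Real.Gamma x / Real.Gamma x

/-!
ψ(x + 1) − log (x + 1/2) decreases along `x, x + 1, x + 2, …`, since its decrement
`log (x + 3/2) − log (x + 1/2) − 1/(x + 1)` is positive by the series of `log (1 + 1/a)`,
and it tends to `0` because convexity of `log ∘ Γ` squeezes ψ(t + 1) between `log t`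
and `log (t + 1)`. A strictly decreasing sequence with limit `0` starts out positive.
-/

open Real Filter Topology Set

theorem inv_add_half_lt_log_add_one_sub_log {a : ℝ} (ha : 0 < a) :
    (a + 1 / 2)⁻¹ < log (a + 1) - log a := by
  have hsum := hasSum_log_one_add_inv ha
  rw [show 1 + a⁻¹ = (a + 1) / a by field_simp, log_div (by positivity) ha.ne'] at hsum
  calc (a + 1 / 2)⁻¹ = 2 * (1 / (2 * ((0 : ℕ) : ℝ) + 1)) * (1 / (2 * a + 1)) ^ (2 * 0 + 1) := by
        norm_num
        field_simp
    _ < log (a + 1) - log a :=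
        lt_hasSum hsum 0 (fun _ _ ↦ by positivity) 1 one_ne_zero (by positivity)

theorem digamma_add_one {x : ℝ} (hx : ∀ m : ℕ, x ≠ -m) :
    digamma (x + 1) = digamma x + x⁻¹ := by
  have hx0 : x ≠ 0 := by simpa using hx 0
  have hΓ : DifferentiableAt ℝ Gamma x := differentiableAt_Gamma hx
  calc digamma (x + 1)
      = logDeriv (fun y ↦ Gamma (y + 1)) x := by
        rw [logDeriv_apply, deriv_comp_add_const]
        rfl
    _ = logDeriv (fun y ↦ y * Gamma y) x :=
        (logDeriv_congr_nhds <| by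
          filter_upwards [isOpen_ne.mem_nhds hx0] with y hy using Gamma_add_one hy).self_of_nhds
    _ = digamma x + x⁻¹ := by
        rw [logDeriv_mul (f := fun y ↦ y) x hx0 (Gamma_ne_zero hx) differentiableAt_fun_id hΓ,
          logDeriv_id', one_div, add_comm]
        rfl

theorem hasDerivAt_log_Gamma {x : ℝ} (hx : ∀ m : ℕ, x ≠ -m) :
    HasDerivAt (log ∘ Gamma) (digamma x) x :=
  (differentiableAt_Gamma hx).hasDerivAt.log (Gamma_ne_zero hx)

theorem slope_log_Gamma_add_one {x : ℝ} (hx : 0 < x) :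
    slope (log ∘ Gamma) x (x + 1) = log x := by
  rw [slope_def_field, add_sub_cancel_left, div_one, Function.comp_apply, Function.comp_apply,
    Gamma_add_one hx.ne', log_mul hx.ne' (Gamma_pos_of_pos hx).ne', add_sub_cancel_right]

theorem log_le_digamma_add_one {x : ℝ} (hx : 0 < x) : log x ≤ digamma (x + 1) := by
  rw [← slope_log_Gamma_add_one hx]
  exact convexOn_log_Gamma.slope_le_of_hasDerivAt hx (mem_Ioi.mpr (by linarith)) (lt_add_one x)
    (hasDerivAt_log_Gamma fun m ↦ by linarith [m.cast_nonneg (α := ℝ)])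

theorem digamma_le_log {x : ℝ} (hx : 0 < x) : digamma x ≤ log x := by
  rw [← slope_log_Gamma_add_one hx]
  exact convexOn_log_Gamma.le_slope_of_hasDerivAt hx (mem_Ioi.mpr (by linarith)) (lt_add_one x)
    (hasDerivAt_log_Gamma fun m ↦ by linarith [m.cast_nonneg (α := ℝ)])

noncomputable def digammaExcess (x : ℝ) : ℝ := digamma (x + 1) - log (x + 1 / 2)

theorem digammaExcess_add_one_lt {x : ℝ} (hx : -1 / 2 < x) :
    digammaExcess (x + 1) < digammaExcess x := by
  have hrec : digamma (x + 1 + 1) = digamma (x + 1) + (x + 1)⁻¹ :=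
    digamma_add_one fun m ↦ by linarith [m.cast_nonneg (α := ℝ)]
  have hlog := inv_add_half_lt_log_add_one_sub_log (a := x + 1 / 2) (by linarith)
  rw [show x + 1 / 2 + 1 / 2 = x + 1 by ring] at hlog
  rw [digammaExcess, digammaExcess, hrec, show x + 1 + 1 / 2 = x + 1 / 2 + 1 by ring]
  linarith

theorem strictAnti_digammaExcess_add_nat {x : ℝ} (hx : -1 / 2 < x) :
    StrictAnti fun n : ℕ ↦ digammaExcess (x + n) :=
  strictAnti_nat_of_succ_lt fun n ↦ by
    rw [Nat.cast_succ, ← add_assoc]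
    exact digammaExcess_add_one_lt (by linarith [n.cast_nonneg (α := ℝ)])

theorem tendsto_digammaExcess_atTop : Tendsto digammaExcess atTop (𝓝 0) := by
  have hlower : Tendsto (fun t ↦ log t - log (t + 1 / 2)) atTop (𝓝 0) := by
    simpa using (tendsto_log_comp_add_sub_log (1 / 2)).neg
  have hupper : Tendsto (fun t ↦ log (t + 1) - log (t + 1 / 2)) atTop (𝓝 0) := by
    convert (tendsto_log_comp_add_sub_log (1 / 2)).comp
      (tendsto_atTop_add_const_right _ (1 / 2) tendsto_id) using 2 with t
    norm_num [add_assoc]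
  refine tendsto_of_tendsto_of_tendsto_of_le_of_le' hlower hupper ?_ ?_ <;>
    filter_upwards [eventually_gt_atTop 0] with t ht <;> rw [digammaExcess]
  · linarith [log_le_digamma_add_one ht]
  · linarith [digamma_le_log (x := t + 1) (by linarith)]

theorem digammaExcess_pos {x : ℝ} (hx : -1 / 2 < x) : 0 < digammaExcess x := by
  have hanti := strictAnti_digammaExcess_add_nat hx
  have hlim : Tendsto (fun n : ℕ ↦ digammaExcess (x + n)) atTop (𝓝 0) :=
    tendsto_digammaExcess_atTop.comp <|
      tendsto_atTop_add_const_left _ x tendsto_natCast_atTop_atTop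
  simpa using (hanti.antitone.le_of_tendsto hlim 1).trans_lt (hanti zero_lt_one)

theorem digamma_lower_bound (x : ℝ) (hx : 0 < x) :
    Real.log (x + 1 / 2) < digamma (x + 1) :=
  sub_pos.mp (digammaExcess_pos (by linarith))
end

section
/- For every positive integer n, Σ_{k=2}^{n} [(n−k)/(n−k+1)] · [(k−1)(k+18)/((k+1)(k+2)(k+3))] = [(n³+7n²−12n+24)/((n+2)(n+3)(n+4))] · H_n − [n(11n²+8n+21)/((n+1)(n+2)(n+3)(n+4))], where H_n = Σ_{k=1}^{n} 1/k is the n-th harmonic number. -/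
open Finset

lemma sum_E1 (n : ℕ) (hn : 0 < n) :
    ∑ k ∈ Finset.Icc 2 n, 1 / ((k : ℝ) + 1)
      = (∑ k ∈ Finset.Icc 1 n, 1 / (k : ℝ)) + 1 / ((n : ℝ) + 1) - 3 / 2 := by
  induction n, hn using Nat.le_induction with
  | base => norm_num
  | succ n hn ih =>
    rw [Finset.sum_Icc_succ_top (by omega : 2 ≤ n + 1),
        Finset.sum_Icc_succ_top (by omega : 1 ≤ n + 1), ih]
    push_cast
    ring

lemma sum_E2 (n : ℕ) (hn : 0 < n) :
    ∑ k ∈ Finset.Icc 2 n, 1 / ((k : ℝ) + 2)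
      = (∑ k ∈ Finset.Icc 1 n, 1 / (k : ℝ)) + 1 / ((n : ℝ) + 1) + 1 / ((n : ℝ) + 2)
        - 11 / 6 := by
  induction n, hn using Nat.le_induction with
  | base => norm_num
  | succ n hn ih =>
    rw [Finset.sum_Icc_succ_top (by omega : 2 ≤ n + 1),
        Finset.sum_Icc_succ_top (by omega : 1 ≤ n + 1), ih]
    push_cast
    ring

lemma sum_E3 (n : ℕ) (hn : 0 < n) :
    ∑ k ∈ Finset.Icc 2 n, 1 / ((k : ℝ) + 3)
      = (∑ k ∈ Finset.Icc 1 n, 1 / (k : ℝ)) + 1 / ((n : ℝ) + 1) + 1 / ((n : ℝ) + 2)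
        + 1 / ((n : ℝ) + 3) - 25 / 12 := by
  induction n, hn using Nat.le_induction with
  | base => norm_num
  | succ n hn ih =>
    rw [Finset.sum_Icc_succ_top (by omega : 2 ≤ n + 1),
        Finset.sum_Icc_succ_top (by omega : 1 ≤ n + 1), ih]
    push_cast
    ring

lemma sum_R (n : ℕ) (hn : 0 < n) :
    ∑ k ∈ Finset.Icc 2 n, 1 / ((n : ℝ) + 1 - k)
      = (∑ k ∈ Finset.Icc 1 n, 1 / (k : ℝ)) - 1 / (n : ℝ) := by
  have h1 : ∑ k ∈ Finset.Icc 2 n, 1 / ((n : ℝ) + 1 - k)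
      = ∑ j ∈ Finset.Icc 1 (n - 1), 1 / (j : ℝ) := by
    apply Finset.sum_nbij' (i := fun k => n + 1 - k) (j := fun j => n + 1 - j)
    · intro k hk
      simp only [Finset.mem_Icc] at *
      omega
    · intro j hj
      simp only [Finset.mem_Icc] at *
      omega
    · intro k hk
      simp only [Finset.mem_Icc] at hk
      omega
    · intro j hj
      simp only [Finset.mem_Icc] at hj
      omega
    · intro k hk
      simp only [Finset.mem_Icc] at hk
      have : ((n + 1 - k : ℕ) : ℝ) = (n : ℝ) + 1 - k := by
        have : k ≤ n + 1 := by omega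
        push_cast [Nat.cast_sub this]
        ring
      rw [this]
  rw [h1]
  obtain ⟨m, rfl⟩ : ∃ m, n = m + 1 := ⟨n - 1, by omega⟩
  rw [Finset.sum_Icc_succ_top (by omega : 1 ≤ m + 1)]
  simp

theorem sum_identity_harmonic (n : ℕ) (hn : 0 < n) :
    ∑ k ∈ Finset.Icc 2 n,
        (((n : ℝ) - k) / ((n : ℝ) - k + 1)) *
          (((k : ℝ) - 1) * ((k : ℝ) + 18) / (((k : ℝ) + 1) * ((k : ℝ) + 2) * ((k : ℝ) + 3)))
      = (((n : ℝ) ^ 3 + 7 * (n : ℝ) ^ 2 - 12 * (n : ℝ) + 24) /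
            (((n : ℝ) + 2) * ((n : ℝ) + 3) * ((n : ℝ) + 4))) *
          (∑ k ∈ Finset.Icc 1 n, 1 / (k : ℝ))
        - (n : ℝ) * (11 * (n : ℝ) ^ 2 + 8 * (n : ℝ) + 21) /
            (((n : ℝ) + 1) * ((n : ℝ) + 2) * ((n : ℝ) + 3) * ((n : ℝ) + 4)) := by
  have hn1 : ((n : ℝ)) ≠ 0 := by positivity
  have hn2 : ((n : ℝ) + 1) ≠ 0 := by positivity
  have hn3 : ((n : ℝ) + 2) ≠ 0 := by positivity
  have hn4 : ((n : ℝ) + 3) ≠ 0 := by positivity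
  have hn5 : ((n : ℝ) + 4) ≠ 0 := by positivity
  have key : ∀ k ∈ Finset.Icc 2 n,
      (((n : ℝ) - k) / ((n : ℝ) - k + 1)) *
          (((k : ℝ) - 1) * ((k : ℝ) + 18) / (((k : ℝ) + 1) * ((k : ℝ) + 2) * ((k : ℝ) + 3)))
        = (-17 * ((n : ℝ) + 1) / ((n : ℝ) + 2)) * (1 / ((k : ℝ) + 1))
          + (48 * ((n : ℝ) + 2) / ((n : ℝ) + 3)) * (1 / ((k : ℝ) + 2))
          + (-30 * ((n : ℝ) + 3) / ((n : ℝ) + 4)) * (1 / ((k : ℝ) + 3))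
          + (17 / ((n : ℝ) + 2) - 48 / ((n : ℝ) + 3) + 30 / ((n : ℝ) + 4)) *
              (1 / ((n : ℝ) + 1 - k)) := by
    intro k hk
    simp only [Finset.mem_Icc] at hk
    have hk1 : ((k : ℝ) + 1) ≠ 0 := by positivity
    have hk2 : ((k : ℝ) + 2) ≠ 0 := by positivity
    have hk3 : ((k : ℝ) + 3) ≠ 0 := by positivity
    have hkn : (k : ℝ) ≤ (n : ℝ) := by exact_mod_cast hk.2
    have hnk : ((n : ℝ) + 1 - k) ≠ 0 := by linarith
    have hnk' : ((n : ℝ) - k + 1) ≠ 0 := by linarith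
    field_simp
    ring
  rw [Finset.sum_congr rfl key]
  simp only [Finset.sum_add_distrib, ← Finset.mul_sum]
  rw [sum_E1 n hn, sum_E2 n hn, sum_E3 n hn, sum_R n hn]
  field_simp
  ring
end

section
/- For r ∈ (0,1), the identity 1 − (4/5 · (1 − (1−r²)^(5/4))/(1 − (1−r²)))² = (16/25) Σ_{n=1}^{∞} [(2(−5/4)_{n+2} − (−5/2)_{n+2})/(n+2)!] r^{2n} holds, where (a)_n denotes the Pochhammer symbol. -/
/-!
With `x = r²` and `A = (1 - x)^(5/4)`, the left side is `(16/25) (2A - A² - 1 + (25/16) x²) / x²`,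
and `A² = (1 - x)^(5/2)`. Both `A` and `A²` are binomial series `∑ (-a)ₙ/n! xⁿ`, and the series of
`2A - A²` starts with `1 + 0·x - (25/16) x²`; stripping these three terms and dividing by `x²`
leaves the series on the right.
-/

/-- Rising factorial (Pochhammer symbol) of a real number. -/
noncomputable def poch (a : ℝ) (n : ℕ) : ℝ := ∏ i ∈ Finset.range n, (a + i)

open scoped Nat

lemma poch_neg_eq_neg_one_pow_mul_descPochhammer_eval (a : ℝ) (n : ℕ) :
    poch (-a) n = (-1) ^ n * (descPochhammer ℝ n).eval a := by
  rw [descPochhammer_eval_eq_prod_range, poch, ← Finset.card_range n, ← Finset.prod_const,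
    Finset.card_range, ← Finset.prod_mul_distrib]
  exact Finset.prod_congr rfl fun _ _ => by ring

lemma choose_mul_neg_pow_eq_poch_neg (a x : ℝ) (n : ℕ) :
    Ring.choose a n * (-x) ^ n = poch (-a) n / n ! * x ^ n := by
  have h_smeval : (descPochhammer ℤ n).smeval a = (descPochhammer ℝ n).eval a := by
    rw [← Polynomial.aeval_eq_smeval]
    simp [Polynomial.aeval_def, Polynomial.eval₂_eq_eval_map]
  rw [Ring.choose_eq_smul, smul_eq_mul, h_smeval, poch_neg_eq_neg_one_pow_mul_descPochhammer_eval,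
    neg_pow]
  ring

theorem hasSum_poch_neg_div_factorial_mul_pow (a : ℝ) {x : ℝ} (hx : |x| < 1) :
    HasSum (fun n => poch (-a) n / n ! * x ^ n) ((1 - x) ^ a) := by
  have h := (Real.one_add_rpow_hasFPowerSeriesOnBall_zero (a := a)).hasSum (y := -x)
    (by simpa [enorm_eq_nnnorm, ← NNReal.coe_lt_coe] using hx)
  simpa only [binomialSeries, FormalMultilinearSeries.ofScalars_apply_eq, smul_eq_mul,
    choose_mul_neg_pow_eq_poch_neg, zero_sub, ← sub_eq_add_neg] using h

theorem HasSum.shift_div_pow {K : Type*} [Field K] [TopologicalSpace K] [IsTopologicalRing K]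
    {f : ℕ → K} {x s : K} (k : ℕ) (hx : x ≠ 0) (h : HasSum (fun n => f n * x ^ n) s) :
    HasSum (fun n => f (n + k) * x ^ n) ((s - ∑ i ∈ Finset.range k, f i * x ^ i) / x ^ k) := by
  refine (((hasSum_nat_add_iff' k).2 h).div_const (x ^ k)).congr_fun fun n => ?_
  rw [pow_add, ← mul_assoc, mul_div_cancel_right₀ _ (pow_ne_zero k hx)]

theorem one_sub_stolarsky_series (r : ℝ) (hr : r ∈ Set.Ioo (0:ℝ) 1) :
    1 - (4 / 5 * (1 - (1 - r ^ 2) ^ ((5:ℝ) / 4)) / (1 - (1 - r ^ 2))) ^ 2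
      = 16 / 25 *
        ∑' n : ℕ,
          ((2 * poch (-5 / 4) (n + 1 + 2) - poch (-5 / 2) (n + 1 + 2)) /
              ((n + 1 + 2).factorial : ℝ)) * r ^ (2 * (n + 1)) := by
  obtain ⟨hr0, hr1⟩ := hr
  set x := r ^ 2 with hx
  have hx0 : 0 < x := by positivity
  have hx_abs : |x| < 1 := by rw [abs_of_pos hx0]; exact pow_lt_one₀ hr0.le hr1 two_ne_zero
  set c : ℕ → ℝ := fun n => (2 * poch (-5 / 4) n - poch (-5 / 2) n) / n ! with hc
  have h_series :
      HasSum (fun n => c n * x ^ n) (2 * (1 - x) ^ ((5:ℝ) / 4) - (1 - x) ^ ((5:ℝ) / 2)) := by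
    refine (((hasSum_poch_neg_div_factorial_mul_pow (5 / 4) hx_abs).mul_left 2).sub
      (hasSum_poch_neg_div_factorial_mul_pow (5 / 2) hx_abs)).congr_fun fun n => ?_
    simp only [hc, neg_div]
    ring
  have h_initial : ∑ i ∈ Finset.range 3, c i * x ^ i = 1 - 25 / 16 * x ^ 2 := by
    norm_num [hc, Finset.sum_range_succ, poch, Finset.prod_range_succ, Nat.factorial]
    ring
  have h_tail := (h_series.shift_div_pow 3 hx0.ne').mul_left x
  have h_terms : (fun n : ℕ => x * (c (n + 3) * x ^ n)) = fun n : ℕ =>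
      ((2 * poch (-5 / 4) (n + 1 + 2) - poch (-5 / 2) (n + 1 + 2)) /
        ((n + 1 + 2).factorial : ℝ)) * r ^ (2 * (n + 1)) := by
    funext n
    rw [pow_mul, ← hx]
    ring
  have h_sq : (1 - x) ^ ((5:ℝ) / 2) = ((1 - x) ^ ((5:ℝ) / 4)) ^ 2 := by
    rw [← Real.rpow_natCast, ← Real.rpow_mul (by linarith [abs_lt.1 hx_abs])]
    norm_num
  rw [sub_sub_cancel, ← h_terms, h_tail.tsum_eq, h_initial, h_sq]
  field_simp
  ring
end

section
/- For all x > 0 with x ≠ 1, (7/11)·(x¹¹−1)/(x⁷−1) > (9x⁸+14x⁴+9)²/(128(x⁴+1)³), i.e. S_{11/4,7/4}(1,x⁴) exceeds the approximant A₃(x⁴) = (9x⁸+14x⁴+9)²/(128(x⁴+1)³). -/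
theorem A5_gt_A3 (x : ℝ) (hx : 0 < x) (hx1 : x ≠ 1) :
    (9 * x ^ 8 + 14 * x ^ 4 + 9) ^ 2 / (128 * (x ^ 4 + 1) ^ 3) <
      7 / 11 * (x ^ 11 - 1) / (x ^ 7 - 1) := by
  have hd : (0:ℝ) < 128 * (x ^ 4 + 1) ^ 3 := by positivity
  have hQ : (0:ℝ) < 5 + 35*x + 140*x^2 + 420*x^3 + 966*x^4 + 1722*x^5 + 2268*x^6
      + 2415*x^7 + 2362*x^8 + 2415*x^9 + 2268*x^10 + 1722*x^11 + 966*x^12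
      + 420*x^13 + 140*x^14 + 35*x^15 + 5*x^16 := by positivity
  rcases lt_or_gt_of_ne hx1 with h | h
  · -- x < 1
    have h7 : (0:ℝ) < 11 * (1 - x ^ 7) := by nlinarith [pow_lt_one₀ hx.le h (by norm_num : 7 ≠ 0)]
    have hrw : 7 / 11 * (x ^ 11 - 1) / (x ^ 7 - 1) = 7 * (1 - x ^ 11) / (11 * (1 - x ^ 7)) := by
      rw [div_eq_div_iff (by intro hc; apply hx1; nlinarith [sq_nonneg (x^3+x^2+x+1), sq_nonneg (x^3-x)] : (x:ℝ)^7 - 1 ≠ 0) (ne_of_gt h7)]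
      ring
    rw [hrw, div_lt_div_iff₀ hd h7]
    have key : 7 * (1 - x ^ 11) * (128 * (x ^ 4 + 1) ^ 3)
        - (9 * x ^ 8 + 14 * x ^ 4 + 9) ^ 2 * (11 * (1 - x ^ 7))
        = (1 - x) ^ 7 * (5 + 35*x + 140*x^2 + 420*x^3 + 966*x^4 + 1722*x^5 + 2268*x^6
      + 2415*x^7 + 2362*x^8 + 2415*x^9 + 2268*x^10 + 1722*x^11 + 966*x^12
      + 420*x^13 + 140*x^14 + 35*x^15 + 5*x^16) := by ring
    nlinarith [mul_pos (pow_pos (by linarith : (0:ℝ) < 1 - x) 7) hQ]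
  · -- x > 1
    have h7 : (0:ℝ) < 11 * (x ^ 7 - 1) := by nlinarith [one_lt_pow₀ h (by norm_num : 7 ≠ 0)]
    have hrw : 7 / 11 * (x ^ 11 - 1) / (x ^ 7 - 1) = 7 * (x ^ 11 - 1) / (11 * (x ^ 7 - 1)) := by
      rw [div_eq_div_iff (by nlinarith : (x:ℝ)^7 - 1 ≠ 0) (ne_of_gt h7)]
      ring
    rw [hrw, div_lt_div_iff₀ hd h7]
    have key : 7 * (x ^ 11 - 1) * (128 * (x ^ 4 + 1) ^ 3)
        - (9 * x ^ 8 + 14 * x ^ 4 + 9) ^ 2 * (11 * (x ^ 7 - 1))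
        = (x - 1) ^ 7 * (5 + 35*x + 140*x^2 + 420*x^3 + 966*x^4 + 1722*x^5 + 2268*x^6
      + 2415*x^7 + 2362*x^8 + 2415*x^9 + 2268*x^10 + 1722*x^11 + 966*x^12
      + 420*x^13 + 140*x^14 + 35*x^15 + 5*x^16) := by ring
    nlinarith [mul_pos (pow_pos (by linarith : (0:ℝ) < x - 1) 7) hQ]
end

section
/- For all x > 0 with x ≠ 1, (1/128)·(9x²+14x+9)²/(x+1)³ > (23(1+x)/2 − 10x/(1+x) − 2√((1+x²)/2))/16. -/
theorem A3_gt_A2 (x : ℝ) (hx : 0 < x) (hx1 : x ≠ 1) :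
    (23 * (1 + x) / 2 - 10 * x / (1 + x) - 2 * Real.sqrt ((1 + x ^ 2) / 2)) / 16 <
      1 / 128 * (9 * x ^ 2 + 14 * x + 9) ^ 2 / (x + 1) ^ 3 := by
  set s := Real.sqrt ((1 + x ^ 2) / 2) with hsdef
  have hs0 : 0 ≤ s := Real.sqrt_nonneg _
  have hs2 : s ^ 2 = (1 + x ^ 2) / 2 := Real.sq_sqrt (by positivity)
  have h1 : (0:ℝ) < 1 + x := by linarith
  have hne : x - 1 ≠ 0 := sub_ne_zero.mpr hx1
  have hG : (0:ℝ) < (x - 1) ^ 6 * (7 * x ^ 2 + 18 * x + 7) := by positivity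
  have key : 11 * x ^ 4 + 36 * x ^ 3 + 34 * x ^ 2 + 36 * x + 11 < 16 * (x + 1) ^ 3 * s := by
    have hb : 0 ≤ 16 * (x + 1) ^ 3 * s := by positivity
    refine lt_of_pow_lt_pow_left₀ 2 hb ?_
    have : (16 * (x + 1) ^ 3 * s) ^ 2 = 128 * (1 + x ^ 2) * (x + 1) ^ 6 := by
      have : (16 * (x + 1) ^ 3 * s) ^ 2 = 256 * (x + 1) ^ 6 * s ^ 2 := by ring
      rw [this, hs2]; ring
    rw [this]
    nlinarith [hG]
  rw [div_lt_div_iff₀ (by norm_num : (0:ℝ) < 16) (by positivity : (0:ℝ) < (x + 1) ^ 3)] at *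
  have h10 : 10 * x / (1 + x) * (1 + x) = 10 * x := by field_simp
  nlinarith [key, sq_nonneg (x - 1), mul_pos h1 h1]
end

section
/- For all x > 0 with x ≠ 1, ((1+x³)/2)^{2/3} > (1+x²+x⁴)/(2(1+x²)) + (1+x²)/8. -/
theorem A1_gt_A4 (x : ℝ) (hx : 0 < x) (hx1 : x ≠ 1) :
    (1 + x ^ 2 + x ^ 4) / (2 * (1 + x ^ 2)) + (1 + x ^ 2) / 8 <
      ((1 + x ^ 3) / 2) ^ ((2:ℝ) / 3) := by
  have hd : (0:ℝ) < 1 + x ^ 2 := by positivity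
  have ha : (0:ℝ) ≤ (1 + x ^ 3) / 2 := by positivity
  set R : ℝ := (1 + x ^ 2 + x ^ 4) / (2 * (1 + x ^ 2)) + (1 + x ^ 2) / 8 with hR
  have hRval : R = (5 + 6 * x ^ 2 + 5 * x ^ 4) / (8 * (1 + x ^ 2)) := by
    rw [hR]; field_simp; ring
  have hne : x - 1 ≠ 0 := sub_ne_zero.mpr hx1
  have h2 : 0 < (x - 1) ^ 2 := pow_two_pos_of_ne_zero hne
  have h6 : 0 < ((x - 1) ^ 2) ^ 3 := pow_pos h2 3
  have hS : 0 < 3*x^6 + 18*x^5 - 3*x^4 + 28*x^3 - 3*x^2 + 18*x + 3 := by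
    nlinarith [mul_pos h2 (pow_pos hx 3), mul_pos h2 hx, pow_pos hx 5, pow_pos hx 3, hx]
  have hP : 0 < ((x - 1) ^ 2) ^ 3 * (3*x^6 + 18*x^5 - 3*x^4 + 28*x^3 - 3*x^2 + 18*x + 3) :=
    mul_pos h6 hS
  have hkey : R ^ 3 < ((1 + x ^ 3) / 2) ^ 2 := by
    rw [hRval, div_pow, div_lt_iff₀ (by positivity)]
    nlinarith [hP]
  have hRnn : 0 ≤ R := by rw [hRval]; positivity
  have hcube : (((1 + x ^ 3) / 2) ^ ((2:ℝ) / 3)) ^ 3 = ((1 + x ^ 3) / 2) ^ 2 := by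
    rw [← Real.rpow_natCast (((1 + x ^ 3) / 2) ^ ((2:ℝ) / 3)) 3, ← Real.rpow_mul ha]
    norm_num
  have := lt_of_pow_lt_pow_left₀ 3 (by positivity) (hcube ▸ hkey)
  exact this
end

section
/- For all x > 0 with x ≠ 1, ((4/5)·(1−x^{5/2})/(1−x²))² < (1+x^{5/4})/(1+x^{1/4}), i.e. the Stolarsky mean S_{5/2,2}(1,x) is strictly less than the Lehmer mean L_{1/4}(1,x) = (1+x^{5/4})/(1+x^{1/4}). -/
theorem S52_lt_Lehmer (x : ℝ) (hx : 0 < x) (hx1 : x ≠ 1) :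
    (4 / 5 * (1 - x ^ ((5:ℝ) / 2)) / (1 - x ^ 2)) ^ 2 <
      (1 + x ^ ((5:ℝ) / 4)) / (1 + x ^ ((1:ℝ) / 4)) := by
  set t := x ^ ((1:ℝ)/4) with htdef
  have ht : 0 < t := Real.rpow_pos_of_pos hx _
  have hpow : ∀ n : ℕ, t ^ n = x ^ ((n : ℝ) / 4) := by
    intro n
    rw [htdef, ← Real.rpow_natCast (x ^ ((1:ℝ)/4)) n, ← Real.rpow_mul hx.le]
    ring_nf
  have hx52 : x ^ ((5:ℝ)/2) = t ^ 10 := by rw [hpow 10]; norm_num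
  have hx2 : x ^ 2 = t ^ 8 := by
    rw [hpow 8, ← Real.rpow_natCast x 2]
    norm_num
  have hx54 : x ^ ((5:ℝ)/4) = t ^ 5 := by rw [hpow 5]; norm_num
  have ht1 : t ≠ 1 := by
    intro h
    apply hx1
    have h4 : t ^ 4 = x := by
      rw [hpow 4]; norm_num
    rw [h] at h4; simpa using h4.symm
  have h8 : (1 : ℝ) - t ^ 8 ≠ 0 := by
    rcases lt_or_gt_of_ne ht1 with h | h
    · have : t ^ 8 < 1 := pow_lt_one₀ ht.le h (by norm_num)
      linarith
    · have : 1 < t ^ 8 := one_lt_pow₀ h (by norm_num)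
      linarith
  rw [hx52, hx2, hx54]
  have hd : (0:ℝ) < (1 - t ^ 8) ^ 2 := by positivity
  have hden : (0:ℝ) < 1 + t := by linarith
  rw [div_pow, div_lt_div_iff₀ hd hden]
  have hR : (0:ℝ) < 9 + 38*t + 93*t^2 + 168*t^3 + 238*t^4 + 277*t^5 + 276*t^6
      + 261*t^7 + 261*t^8 + 276*t^9 + 277*t^10 + 238*t^11 + 168*t^12 + 93*t^13
      + 38*t^14 + 9*t^15 := by positivity
  have h1 : (1:ℝ) - t ≠ 0 := sub_ne_zero.mpr (Ne.symm ht1)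
  have h6 : (0:ℝ) < (1 - t) ^ 6 := by
    have : (0:ℝ) < ((1 - t) ^ 3) ^ 2 := by positivity
    calc (0:ℝ) < ((1 - t) ^ 3) ^ 2 := this
      _ = (1 - t) ^ 6 := by ring
  have key : 25*((1 + t^5)*((1 - t^8)^2)) - 16*((1 - t^10)^2*(1 + t))
      = (1 - t)^6 * (9 + 38*t + 93*t^2 + 168*t^3 + 238*t^4 + 277*t^5 + 276*t^6
      + 261*t^7 + 261*t^8 + 276*t^9 + 277*t^10 + 238*t^11 + 168*t^12 + 93*t^13
      + 38*t^14 + 9*t^15) := by ring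
  nlinarith [mul_pos h6 hR, key]
end

section
/- Let A(t) = Σ_{k≥0} a_k t^k and B(t) = Σ_{k≥0} b_k t^k be real power series converging on (−r, r) with r > 0 and b_k > 0 for all k. If the sequence (a_k/b_k) is (strictly) increasing, then t ↦ A(t)/B(t) is (strictly) increasing on (0, r). -/
/-- Absolute summability inside the interval of convergence, by comparison with a
geometric series. -/
lemma abs_summable_of_summable_on_Ioo (a : ℕ → ℝ) (r : ℝ) (hr : 0 < r)
    (ha : ∀ x ∈ Set.Ioo (-r) r, Summable fun k => a k * x ^ k)
    {x : ℝ} (hx0 : 0 ≤ x) (hxr : x < r) :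
    Summable fun k => ‖a k * x ^ k‖ := by
  obtain ⟨y, hxy, hyr⟩ : ∃ y, x < y ∧ y < r := ⟨(x + r) / 2, by linarith, by linarith⟩
  have hy0 : 0 < y := lt_of_le_of_lt hx0 hxy
  have hsum : Summable fun k => a k * y ^ k :=
    ha y ⟨by linarith, hyr⟩
  have hbdd : BddAbove (Set.range fun k => |a k * y ^ k|) := by
    have := (hsum.tendsto_atTop_zero).abs
    exact this.bddAbove_range
  obtain ⟨C, hC⟩ := hbdd
  have hCk : ∀ k, |a k| * y ^ k ≤ C := by
    intro k
    have := hC (Set.mem_range_self (f := fun k => |a k * y ^ k|) k)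
    rwa [abs_mul, abs_pow, abs_of_pos hy0] at this
  have hgeo : Summable fun k : ℕ => C * (x / y) ^ k := by
    apply Summable.mul_left
    apply summable_geometric_of_lt_one (by positivity)
    rw [div_lt_one hy0]; exact hxy
  apply Summable.of_nonneg_of_le (fun k => norm_nonneg _) _ hgeo
  intro k
  rw [Real.norm_eq_abs, abs_mul, abs_pow, abs_of_nonneg hx0]
  have hyk : (0:ℝ) < y ^ k := by positivity
  calc |a k| * x ^ k = (|a k| * y ^ k) * (x / y) ^ k := by
        rw [div_pow]; field_simp
    _ ≤ C * (x / y) ^ k := by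
        apply mul_le_mul_of_nonneg_right (hCk k) (by positivity)

lemma pair_pos {a b : ℕ → ℝ} (hb : ∀ k, 0 < b k)
    (hmono : StrictMono fun k => a k / b k) {s t : ℝ} (hs : 0 < s) (hst : s < t)
    {j k : ℕ} (h : j < k) :
    0 < (a k * b j - a j * b k) * (s ^ j * t ^ k - t ^ j * s ^ k) := by
  have ht : 0 < t := hs.trans hst
  have h1 : 0 < a k * b j - a j * b k := by
    have := hmono h
    simp only [div_lt_div_iff₀ (hb j) (hb k)] at this
    linarith
  have h2 : 0 < s ^ j * t ^ k - t ^ j * s ^ k := by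
    obtain ⟨m, hm, rfl⟩ : ∃ m, m ≠ 0 ∧ k = j + m := ⟨k - j, by omega, by omega⟩
    have hlt : s ^ m < t ^ m := pow_lt_pow_left₀ hst hs.le hm
    calc (0:ℝ) < s ^ j * t ^ j * (t ^ m - s ^ m) := by
          apply mul_pos (by positivity); linarith
      _ = s ^ j * t ^ (j + m) - t ^ j * s ^ (j + m) := by
          rw [pow_add, pow_add]; ring
  exact mul_pos h1 h2

lemma swap_summable {f : ℕ × ℕ → ℝ} (hf : Summable f) :
    Summable fun p : ℕ × ℕ => f p.swap := hf.prod_symm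

lemma swap_tsum (f : ℕ × ℕ → ℝ) : ∑' p : ℕ × ℕ, f p.swap = ∑' p : ℕ × ℕ, f p :=
  (Equiv.prodComm ℕ ℕ).tsum_eq f

set_option maxHeartbeats 1000000 in
theorem ratio_of_power_series_strictMono (a b : ℕ → ℝ) (r : ℝ) (hr : 0 < r)
    (hb : ∀ k, 0 < b k)
    (ha_conv : ∀ x ∈ Set.Ioo (-r) r, Summable fun k => a k * x ^ k)
    (hb_conv : ∀ x ∈ Set.Ioo (-r) r, Summable fun k => b k * x ^ k)
    (hmono : StrictMono fun k => a k / b k) :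
    StrictMonoOn (fun t => (∑' k, a k * t ^ k) / (∑' k, b k * t ^ k)) (Set.Ioo 0 r) := by
  intro s hs t ht hst
  obtain ⟨hs0, hsr⟩ := hs
  obtain ⟨ht0, htr⟩ := ht
  have hmemS : s ∈ Set.Ioo (-r) r := ⟨by linarith, hsr⟩
  have hmemT : t ∈ Set.Ioo (-r) r := ⟨by linarith, htr⟩
  have hBs : 0 < ∑' k, b k * s ^ k := by
    apply Summable.tsum_pos (hb_conv s hmemS) (fun k => (mul_pos (hb k) (pow_pos hs0 k)).le) 0
    simpa using (hb 0)
  have hBt : 0 < ∑' k, b k * t ^ k := by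
    apply Summable.tsum_pos (hb_conv t hmemT) (fun k => (mul_pos (hb k) (pow_pos ht0 k)).le) 0
    simpa using (hb 0)
  simp only
  rw [div_lt_div_iff₀ hBs hBt]
  -- summable norms
  have hAs : Summable fun k => ‖a k * s ^ k‖ :=
    abs_summable_of_summable_on_Ioo a r hr ha_conv hs0.le hsr
  have hAt : Summable fun k => ‖a k * t ^ k‖ :=
    abs_summable_of_summable_on_Ioo a r hr ha_conv ht0.le htr
  have hBsN : Summable fun k => ‖b k * s ^ k‖ :=
    abs_summable_of_summable_on_Ioo b r hr hb_conv hs0.le hsr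
  have hBtN : Summable fun k => ‖b k * t ^ k‖ :=
    abs_summable_of_summable_on_Ioo b r hr hb_conv ht0.le htr
  set f : ℕ × ℕ → ℝ := fun p =>
    a p.1 * t ^ p.1 * (b p.2 * s ^ p.2) - a p.1 * s ^ p.1 * (b p.2 * t ^ p.2) with hf
  have hsum1 : Summable fun p : ℕ × ℕ => a p.1 * t ^ p.1 * (b p.2 * s ^ p.2) :=
    summable_mul_of_summable_norm hAt hBsN
  have hsum2 : Summable fun p : ℕ × ℕ => a p.1 * s ^ p.1 * (b p.2 * t ^ p.2) :=
    summable_mul_of_summable_norm hAs hBtN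
  have hfs : Summable f := hsum1.sub hsum2
  have hfswap : Summable fun p : ℕ × ℕ => f p.swap := swap_summable hfs
  have hswap_eq : ∑' p : ℕ × ℕ, f p.swap = ∑' p : ℕ × ℕ, f p := swap_tsum f
  have hpair : ∀ p : ℕ × ℕ, f p + f p.swap =
      (a p.2 * b p.1 - a p.1 * b p.2) * (s ^ p.1 * t ^ p.2 - t ^ p.1 * s ^ p.2) := by
    rintro ⟨j, k⟩
    simp only [hf, Prod.swap_prod_mk]
    ring
  have hnonneg : ∀ p : ℕ × ℕ, 0 ≤ f p + f p.swap := by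
    rintro ⟨j, k⟩
    rw [hpair ⟨j, k⟩]
    rcases lt_trichotomy j k with h | h | h
    · exact (pair_pos hb hmono hs0 hst h).le
    · subst h; simp
    · have h3 := pair_pos hb hmono hs0 hst h
      have heq : (a k * b j - a j * b k) * (s ^ j * t ^ k - t ^ j * s ^ k)
          = (a j * b k - a k * b j) * (s ^ k * t ^ j - t ^ k * s ^ j) := by ring
      rw [heq]; exact h3.le
  have hpt : 0 < f (0, 1) + f (0, 1).swap := by
    rw [hpair (0, 1)]
    exact pair_pos hb hmono hs0 hst (by norm_num)
  have hpos : 0 < ∑' p : ℕ × ℕ, (f p + f p.swap) :=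
    Summable.tsum_pos (hfs.add hfswap) hnonneg (0, 1) hpt
  rw [Summable.tsum_add hfs hfswap, hswap_eq] at hpos
  have hfpos : 0 < ∑' p : ℕ × ℕ, f p := by linarith
  have hsub : ∑' p : ℕ × ℕ, f p =
      (∑' p : ℕ × ℕ, a p.1 * t ^ p.1 * (b p.2 * s ^ p.2)) -
      (∑' p : ℕ × ℕ, a p.1 * s ^ p.1 * (b p.2 * t ^ p.2)) :=
    Summable.tsum_sub hsum1 hsum2
  have hp1 : (∑' k, a k * t ^ k) * (∑' k, b k * s ^ k) =
      ∑' p : ℕ × ℕ, a p.1 * t ^ p.1 * (b p.2 * s ^ p.2) :=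
    tsum_mul_tsum_of_summable_norm hAt hBsN
  have hp2 : (∑' k, a k * s ^ k) * (∑' k, b k * t ^ k) =
      ∑' p : ℕ × ℕ, a p.1 * s ^ p.1 * (b p.2 * t ^ p.2) :=
    tsum_mul_tsum_of_summable_norm hAs hBtN
  rw [hp1, hp2]
  linarith [hsub, hfpos]
end
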